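/- arXiv:1302.5598 — 7 statements merged into one kernel-verified Lean document; each statement's English description precedes it below -/
import Mathlib

section
/- Let Γ be the free group on a set S. For c ∈ Γ let |c| denote the length of the reduced word representing c. Fix n ∈ ℕ and suppose g : Γ → ℂ is finitely supported with support contained in {c ∈ Γ : |c| = n}. Then for every finitely supported f : Γ → ℂ one has ‖f*g‖₂ ≤ (n+1)·‖f‖₂·‖g‖₂. -/
/-!
If `c = a * b` with `|b| = n`, the reduced words factor as `a = p u`, `b = u⁻¹ s`, `c = p s`,
and the length `k = |u| ∈ [0, n]` of the cancelled part sorts the terms of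
`(f * g)(c) = ∑ f(a) g(b)` into `n + 1` pieces `H_k`. For fixed `k` the word `c` determines `p`
and `s` (its prefix and its suffix of length `n - k`), while `p` only depends on `a` and `s` only
on `b`. Cauchy–Schwarz over `u` then gives `|H_k(c)|² ≤ Φ(p) Ψ(s)`, where `Φ(p)` sums `|f|²` over
the words `p u` and `Ψ(s)` sums `|g|²` over the words `u⁻¹ s`; since `c ↦ (p, s)` is injective,
`‖H_k‖₂ ≤ ‖f‖₂ ‖g‖₂`. Minkowski's inequality over the `n + 1` values of `k` finishes the proof.
-/

/-- The ℓ²-norm of a finitely supported function, viewed as an element of the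
monoid algebra (so that multiplication is convolution). -/
noncomputable def l2norm {Γ : Type*} (f : MonoidAlgebra ℂ Γ) : ℝ :=
  Real.sqrt (∑ c ∈ f.coeff.support, ‖f.coeff c‖ ^ 2)

namespace FreeGroup

variable {α : Type*}

theorem IsReduced.exists_append_invRev_append {L₁ L₂ : List (α × Bool)}
    (h₁ : IsReduced L₁) (h₂ : IsReduced L₂) :
    ∃ p u s, L₁ = p ++ u ∧ L₂ = invRev u ++ s ∧ IsReduced (p ++ s) := by
  induction L₂ generalizing L₁ with
  | nil => exact ⟨L₁, [], [], by simp, rfl, by simpa⟩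
  | cons y t ih =>
    rcases L₁.eq_nil_or_concat' with rfl | ⟨L, x, rfl⟩
    · exact ⟨[], [], y :: t, rfl, rfl, h₂⟩
    by_cases hxy : x.1 = y.1 → x.2 = y.2
    · refine ⟨L ++ [x], [], y :: t, by simp, rfl, ?_⟩
      exact h₁.append_overlap (L₂ := [x]) (isReduced_cons_cons.2 ⟨hxy, h₂⟩) (List.cons_ne_nil _ _)
    · obtain ⟨p, u, s, rfl, rfl, hps⟩ :=
        ih (L₁ := L) (h₁.infix ⟨[], [x], by simp⟩) (h₂.infix ⟨[y], [], by simp⟩)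
      refine ⟨p, u ++ [x], s, by simp, ?_, hps⟩
      obtain ⟨hx₁, hx₂⟩ := Classical.not_imp.1 hxy
      have : y = (x.1, !x.2) := Prod.ext hx₁.symm (Bool.eq_not.2 (Ne.symm hx₂))
      simp [invRev, this]

variable [DecidableEq α]

theorem exists_toWord_mul (x y : FreeGroup α) :
    ∃ p u s, x.toWord = p ++ u ∧ y.toWord = invRev u ++ s ∧ (x * y).toWord = p ++ s := by
  obtain ⟨p, u, s, hx, hy, hps⟩ :=
    (isReduced_toWord (x := x)).exists_append_invRev_append (isReduced_toWord (x := y))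
  refine ⟨p, u, s, hx, hy, ?_⟩
  rw [← hps.reduce_eq, ← toWord_mk, ← mk_toWord (x := x), ← mk_toWord (x := y), hx, hy,
    ← mul_mk, ← mul_mk, ← mul_mk, ← inv_mk]
  group

/-- The number of letters that cancel when the reduced words of `x` and `y` are concatenated. -/
def cancelLength (x y : FreeGroup α) : ℕ := (norm x + norm y - norm (x * y)) / 2

theorem exists_toWord_mul_cancelLength (x y : FreeGroup α) :
    ∃ p u s, x.toWord = p ++ u ∧ y.toWord = invRev u ++ s ∧ (x * y).toWord = p ++ s ∧
      u.length = cancelLength x y := by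
  obtain ⟨p, u, s, hx, hy, hxy⟩ := exists_toWord_mul x y
  refine ⟨p, u, s, hx, hy, hxy, ?_⟩
  simp only [cancelLength, norm, hx, hy, hxy, List.length_append, invRev_length]
  omega

theorem cancelLength_le_norm_right (x y : FreeGroup α) : cancelLength x y ≤ norm y := by
  obtain ⟨p, u, s, -, hy, -, hu⟩ := exists_toWord_mul_cancelLength x y
  simp [← hu, norm, hy, invRev_length]

theorem rdrop_toWord_mul (x y : FreeGroup α) :
    (x * y).toWord.rdrop (norm y - cancelLength x y) = x.toWord.rdrop (cancelLength x y) := by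
  obtain ⟨p, u, s, hx, hy, hxy, hu⟩ := exists_toWord_mul_cancelLength x y
  simp [← hu, norm, hx, hy, hxy, invRev_length, List.rdrop]

theorem rtake_toWord_mul (x y : FreeGroup α) :
    (x * y).toWord.rtake (norm y - cancelLength x y) = y.toWord.drop (cancelLength x y) := by
  obtain ⟨p, u, s, hx, hy, hxy, hu⟩ := exists_toWord_mul_cancelLength x y
  simp [← hu, norm, hy, hxy, invRev_length, List.rtake]

theorem injective_toWord_rdrop_rtake (j : ℕ) :
    Function.Injective fun x : FreeGroup α ↦ (x.toWord.rdrop j, x.toWord.rtake j) := by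
  intro x y hxy
  apply toWord_injective
  simpa [List.rdrop, List.rtake] using congrArg (fun w ↦ w.1 ++ w.2) hxy

end FreeGroup

open Finset

theorem Finset.sqrt_sum_norm_sum_sq_le {ι κ E : Type*} [SeminormedAddCommGroup E]
    (s : Finset ι) (t : Finset κ) (F : κ → ι → E) :
    √(∑ c ∈ s, ‖∑ k ∈ t, F k c‖ ^ 2) ≤ ∑ k ∈ t, √(∑ c ∈ s, ‖F k c‖ ^ 2) := by
  have hnorm (G : ι → E) : √(∑ c ∈ s, ‖G c‖ ^ 2) = ‖WithLp.toLp 2 fun c : s ↦ G c‖ := by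
    rw [PiLp.norm_eq_of_L2, ← s.sum_coe_sort]
  simp only [hnorm]
  calc ‖WithLp.toLp 2 fun c : s ↦ ∑ k ∈ t, F k c‖
      = ‖∑ k ∈ t, WithLp.toLp 2 fun c : s ↦ F k c‖ := by
        congr 1; ext c; simp
    _ ≤ _ := norm_sum_le _ _

section Convolution

variable {Γ X Y R : Type*} [Group Γ] [NormedRing R]

theorem norm_sum_mul_sq_le_of_forall_mem [DecidableEq Γ] [DecidableEq X] [DecidableEq Y]
    (f g : Γ →₀ R) (c : Γ) (B : Finset Γ) (π₁ : Γ → X) (π₂ : Γ → Y) (x : X) (y : Y)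
    (hB : ∀ b ∈ B, c * b⁻¹ ∈ f.support ∧ b ∈ g.support ∧ π₁ (c * b⁻¹) = x ∧ π₂ b = y) :
    ‖∑ b ∈ B, f (c * b⁻¹) * g b‖ ^ 2 ≤
      (∑ a ∈ f.support with π₁ a = x, ‖f a‖ ^ 2) * ∑ b ∈ g.support with π₂ b = y, ‖g b‖ ^ 2 := by
  have hf : ∑ b ∈ B, ‖f (c * b⁻¹)‖ ^ 2 ≤ ∑ a ∈ f.support with π₁ a = x, ‖f a‖ ^ 2 := by
    rw [← sum_image (f := fun a ↦ ‖f a‖ ^ 2) (g := fun b ↦ c * b⁻¹)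
      fun b₁ _ b₂ _ h ↦ by simpa using h]
    refine sum_le_sum_of_subset_of_nonneg ?_ fun _ _ _ ↦ by positivity
    intro a ha
    obtain ⟨b, hb, rfl⟩ := mem_image.1 ha
    exact mem_filter.2 ⟨(hB b hb).1, (hB b hb).2.2.1⟩
  have hg : ∑ b ∈ B, ‖g b‖ ^ 2 ≤ ∑ b ∈ g.support with π₂ b = y, ‖g b‖ ^ 2 :=
    sum_le_sum_of_subset_of_nonneg (fun b hb ↦ mem_filter.2 ⟨(hB b hb).2.1, (hB b hb).2.2.2⟩)
      fun _ _ _ ↦ by positivity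
  calc ‖∑ b ∈ B, f (c * b⁻¹) * g b‖ ^ 2 ≤ (∑ b ∈ B, ‖f (c * b⁻¹)‖ * ‖g b‖) ^ 2 := by
        gcongr; exact norm_sum_le_of_le _ fun b _ ↦ norm_mul_le _ _
    _ ≤ (∑ b ∈ B, ‖f (c * b⁻¹)‖ ^ 2) * ∑ b ∈ B, ‖g b‖ ^ 2 := sum_mul_sq_le_sq_mul_sq _ _ _
    _ ≤ _ := by gcongr

theorem sum_norm_sum_filter_mul_sq_le (f g : Γ →₀ R) (P : Γ → Γ → Prop) [DecidableRel P]
    (T : Finset Γ) (π₁ : Γ → X) (π₂ : Γ → Y) (γ : Γ → X × Y) (hγ : Function.Injective γ)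
    (hP : ∀ a, ∀ b ∈ g.support, P a b → γ (a * b) = (π₁ a, π₂ b)) :
    ∑ c ∈ T, ‖∑ b ∈ g.support with P (c * b⁻¹) b, f (c * b⁻¹) * g b‖ ^ 2 ≤
      (∑ a ∈ f.support, ‖f a‖ ^ 2) * ∑ b ∈ g.support, ‖g b‖ ^ 2 := by
  classical
  set Φ : X → ℝ := fun x ↦ ∑ a ∈ f.support with π₁ a = x, ‖f a‖ ^ 2
  set Ψ : Y → ℝ := fun y ↦ ∑ b ∈ g.support with π₂ b = y, ‖g b‖ ^ 2
  have hpoint (c : Γ) :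
      ‖∑ b ∈ g.support with P (c * b⁻¹) b, f (c * b⁻¹) * g b‖ ^ 2 ≤ Φ (γ c).1 * Ψ (γ c).2 := by
    rw [← sum_filter_of_ne (p := fun b ↦ c * b⁻¹ ∈ f.support)
      fun b _ h ↦ Finsupp.mem_support_iff.2 (left_ne_zero_of_mul h), filter_filter]
    refine norm_sum_mul_sq_le_of_forall_mem f g c _ π₁ π₂ _ _ fun b hb ↦ ?_
    obtain ⟨hbg, hPb, hf⟩ := mem_filter.1 hb
    have hγc := hP _ b hbg hPb
    rw [inv_mul_cancel_right] at hγc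
    exact ⟨hf, hbg, by simp [hγc], by simp [hγc]⟩
  have hΦ (X' : Finset X) : ∑ x ∈ X', Φ x ≤ ∑ a ∈ f.support, ‖f a‖ ^ 2 :=
    sum_fiberwise_le_sum_of_sum_fiber_nonneg fun _ _ ↦ sum_nonneg fun _ _ ↦ by positivity
  have hΨ (Y' : Finset Y) : ∑ y ∈ Y', Ψ y ≤ ∑ b ∈ g.support, ‖g b‖ ^ 2 :=
    sum_fiberwise_le_sum_of_sum_fiber_nonneg fun _ _ ↦ sum_nonneg fun _ _ ↦ by positivity
  have hΦ₀ (x : X) : 0 ≤ Φ x := sum_nonneg fun _ _ ↦ by positivity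
  have hΨ₀ (y : Y) : 0 ≤ Ψ y := sum_nonneg fun _ _ ↦ by positivity
  calc _ ≤ ∑ c ∈ T, Φ (γ c).1 * Ψ (γ c).2 := sum_le_sum fun c _ ↦ hpoint c
    _ = ∑ z ∈ T.image γ, Φ z.1 * Ψ z.2 := (sum_image (f := fun z ↦ Φ z.1 * Ψ z.2) hγ.injOn).symm
    _ ≤ ∑ z ∈ (T.image γ).image Prod.fst ×ˢ (T.image γ).image Prod.snd, Φ z.1 * Ψ z.2 :=
        sum_le_sum_of_subset_of_nonneg subset_product fun z _ _ ↦ mul_nonneg (hΦ₀ _) (hΨ₀ _)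
    _ = (∑ x ∈ (T.image γ).image Prod.fst, Φ x) * ∑ y ∈ (T.image γ).image Prod.snd, Ψ y := by
        rw [sum_product, sum_mul_sum]
    _ ≤ _ := mul_le_mul (hΦ _) (hΨ _) (sum_nonneg fun _ _ ↦ hΨ₀ _)
        (sum_nonneg fun _ _ ↦ by positivity)

end Convolution

open FreeGroup in
/-- Haagerup's inequality for the free group on a set `S`: if `g` is supported on
reduced words of length `n`, then `‖f * g‖₂ ≤ (n+1) ‖f‖₂ ‖g‖₂`. -/
theorem haagerup_inequality_free_group {S : Type*} [DecidableEq S] (n : ℕ)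
    (g : MonoidAlgebra ℂ (FreeGroup S))
    (hg : ∀ c ∈ g.coeff.support, (FreeGroup.toWord c).length = n)
    (f : MonoidAlgebra ℂ (FreeGroup S)) :
    l2norm (f * g) ≤ (n + 1 : ℝ) * l2norm f * l2norm g := by
  let H (k : ℕ) (c : FreeGroup S) : ℂ :=
    ∑ b ∈ g.coeff.support with cancelLength (c * b⁻¹) b = k, f.coeff (c * b⁻¹) * g.coeff b
  have hsplit (c : FreeGroup S) : (f * g).coeff c = ∑ k ∈ range (n + 1), H k c := by
    rw [MonoidAlgebra.coeff_mul_apply_right, Finsupp.sum, sum_fiberwise_of_maps_to]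
    intro b hb
    exact mem_range_succ_iff.2 (hg b hb ▸ cancelLength_le_norm_right _ _)
  have hH (k : ℕ) : √(∑ c ∈ (f * g).coeff.support, ‖H k c‖ ^ 2) ≤ l2norm f * l2norm g := by
    rw [l2norm, l2norm, ← Real.sqrt_mul (sum_nonneg fun _ _ ↦ by positivity)]
    refine Real.sqrt_le_sqrt (sum_norm_sum_filter_mul_sq_le f.coeff g.coeff
      (fun a b ↦ cancelLength a b = k) _ (fun a ↦ a.toWord.rdrop k) (fun b ↦ b.toWord.drop k)
      _ (injective_toWord_rdrop_rtake (n - k)) ?_)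
    rintro a b hb rfl
    rw [← show norm b = n from hg b hb]
    exact Prod.ext (rdrop_toWord_mul a b) (rtake_toWord_mul a b)
  calc l2norm (f * g)
      = √(∑ c ∈ (f * g).coeff.support, ‖∑ k ∈ range (n + 1), H k c‖ ^ 2) := by
        simp only [l2norm, hsplit]
    _ ≤ ∑ k ∈ range (n + 1), √(∑ c ∈ (f * g).coeff.support, ‖H k c‖ ^ 2) :=
        sqrt_sum_norm_sum_sq_le _ _ _
    _ ≤ ∑ _k ∈ range (n + 1), l2norm f * l2norm g := sum_le_sum fun k _ ↦ hH k
    _ = (n + 1 : ℝ) * l2norm f * l2norm g := by simp [mul_assoc]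
end

section
/- Let T be a tree with vertex set V and let Γ be a group acting freely on V by graph automorphisms of T. Fix a vertex v₀ ∈ V and define the length of c ∈ Γ as |c| = d(v₀, c·v₀). Fix n ∈ ℕ and suppose g : Γ → ℂ is finitely supported with support contained in {c ∈ Γ : |c| = n}. Then for every finitely supported f : Γ → ℂ one has ‖f*g‖₂ ≤ (n+1)·‖f‖₂·‖g‖₂. -/
namespace SimpleGraph

variable {V : Type*} {G : SimpleGraph V}

theorem IsAcyclic.isPath_reverse_append (hG : G.IsAcyclic) {x y z : V} {R : G.Walk x y}
    {S : G.Walk x z} (hR : R.IsPath) (hS : S.IsPath) (h : R.snd ≠ S.snd) :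
    (R.reverse.append S).IsPath := by
  rw [hG.isPath_iff_isChain] at hR hS ⊢
  rw [Walk.edges_append, Walk.edges_reverse, List.isChain_append, List.isChain_reverse]
  refine ⟨hR.imp fun _ _ => Ne.symm, hS, ?_⟩
  cases R <;> cases S <;> simp_all

theorem IsAcyclic.eq_of_isPath (hG : G.IsAcyclic) {x y : V} {P Q : G.Walk x y} (hP : P.IsPath)
    (hQ : Q.IsPath) : P = Q :=
  congrArg Subtype.val <| (hG.subsingleton_path x y).elim ⟨P, hP⟩ ⟨Q, hQ⟩

theorem IsTree.length_eq_dist_of_isPath (hG : G.IsTree) {x y : V} {P : G.Walk x y}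
    (hP : P.IsPath) : P.length = G.dist x y := by
  obtain ⟨Q, hQ, hQlen⟩ := hG.connected.exists_path_of_dist x y
  rwa [hG.isAcyclic.eq_of_isPath hP hQ]

theorem IsTree.exists_median_of_isPath (hG : G.IsTree) {x y z : V} {R : G.Walk x y}
    (hR : R.IsPath) {S : G.Walk x z} (hS : S.IsPath) :
    ∃ m, G.dist x m + G.dist m y = G.dist x y ∧ G.dist x m + G.dist m z = G.dist x z ∧
      G.dist y m + G.dist m z = G.dist y z := by
  induction R with
  | @nil u => exact ⟨u, by simp⟩
  | @cons u x' y hx R' ih =>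
    cases S with
    | nil => exact ⟨z, by simp [dist_comm]⟩
    | @cons _ x'' z _ S' =>
      by_cases hxx : x' = x''
      · subst hxx
        obtain ⟨m, hmy, hmz, hyz⟩ := ih hR.of_cons hS.of_cons
        have hy : G.dist u y = G.dist x' y + 1 := by
          rw [← hG.length_eq_dist_of_isPath hR, ← hG.length_eq_dist_of_isPath hR.of_cons,
            Walk.length_cons]
        have hz : G.dist u z = G.dist x' z + 1 := by
          rw [← hG.length_eq_dist_of_isPath hS, ← hG.length_eq_dist_of_isPath hS.of_cons,
            Walk.length_cons]
        have hum : G.dist u m ≤ 1 + G.dist x' m :=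
          dist_eq_one_iff_adj.mpr hx ▸ hG.connected.dist_triangle
        have hmy' : G.dist u y ≤ G.dist u m + G.dist m y := hG.connected.dist_triangle
        have hmz' : G.dist u z ≤ G.dist u m + G.dist m z := hG.connected.dist_triangle
        exact ⟨m, by omega, by omega, hyz⟩
      · have hW := hG.isAcyclic.isPath_reverse_append hR hS (by simpa using hxx)
        have := hG.length_eq_dist_of_isPath hW
        rw [Walk.length_append, Walk.length_reverse, hG.length_eq_dist_of_isPath hR,
          hG.length_eq_dist_of_isPath hS, dist_comm] at this
        exact ⟨u, by simp, by simp, this⟩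

theorem IsTree.exists_median (hG : G.IsTree) (x y z : V) :
    ∃ m, G.dist x m + G.dist m y = G.dist x y ∧ G.dist x m + G.dist m z = G.dist x z ∧
      G.dist y m + G.dist m z = G.dist y z :=
  have ⟨_, hR⟩ := hG.connected.exists_isPath x y
  have ⟨_, hS⟩ := hG.connected.exists_isPath x z
  hG.exists_median_of_isPath hR hS

theorem IsTree.getVert_eq_of_dist_add_dist_eq (hG : G.IsTree) {x y z : V} {P : G.Walk x y}
    (hP : P.IsPath) (h : G.dist x z + G.dist z y = G.dist x y) : P.getVert (G.dist x z) = z := by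
  obtain ⟨P₁, hP₁⟩ := hG.connected.exists_walk_length_eq_dist x z
  obtain ⟨P₂, hP₂⟩ := hG.connected.exists_walk_length_eq_dist z y
  have hW : (P₁.append P₂).IsPath :=
    (P₁.append P₂).isPath_of_length_eq_dist (by rw [Walk.length_append, hP₁, hP₂, h])
  rw [hG.isAcyclic.eq_of_isPath hP hW, Walk.getVert_append, ← hP₁]
  simp

theorem IsTree.eq_of_dist_add_dist_eq (hG : G.IsTree) {x y z z' : V}
    (hz : G.dist x z + G.dist z y = G.dist x y) (hz' : G.dist x z' + G.dist z' y = G.dist x y)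
    (h : G.dist x z = G.dist x z') : z = z' := by
  obtain ⟨P, hP⟩ := hG.connected.exists_isPath x y
  rw [← hG.getVert_eq_of_dist_add_dist_eq hP hz, h, hG.getVert_eq_of_dist_add_dist_eq hP hz']

end SimpleGraph

open Finset MonoidAlgebra

section L2

variable {Γ : Type*}

theorem l2norm_eq_norm_toLp {f : MonoidAlgebra ℂ Γ} {s : Finset Γ} (hs : f.coeff.support ⊆ s) :
    l2norm f = ‖WithLp.toLp 2 (fun c : s => f.coeff c)‖ := by
  rw [l2norm, EuclideanSpace.norm_eq, sum_coe_sort s fun c => ‖f.coeff c‖ ^ 2]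
  congr 1
  exact sum_subset hs fun c _ hc => by simp [Finsupp.notMem_support_iff.mp hc]

theorem l2norm_add_le (f g : MonoidAlgebra ℂ Γ) : l2norm (f + g) ≤ l2norm f + l2norm g := by
  classical
  set s := f.coeff.support ∪ g.coeff.support
  rw [l2norm_eq_norm_toLp (s := s) (coeff_add f g ▸ Finsupp.support_add),
    l2norm_eq_norm_toLp (s := s) subset_union_left, l2norm_eq_norm_toLp (s := s) subset_union_right]
  exact norm_add_le (WithLp.toLp 2 fun c : s => f.coeff c) (WithLp.toLp 2 fun c : s => g.coeff c)

theorem l2norm_sum_le {ι : Type*} (s : Finset ι) (f : ι → MonoidAlgebra ℂ Γ) :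
    l2norm (∑ i ∈ s, f i) ≤ ∑ i ∈ s, l2norm (f i) := by
  classical
  induction s using Finset.induction_on with
  | empty => simp [l2norm]
  | insert i s hi ih =>
    rw [sum_insert hi, sum_insert hi]
    exact (l2norm_add_le _ _).trans (add_le_add_right ih _)

end L2

section RestrictedMul

variable {Γ : Type*}

open Classical in
noncomputable def restrictedMul [Mul Γ] (P : Γ → Γ → Prop) (f g : MonoidAlgebra ℂ Γ) :
    MonoidAlgebra ℂ Γ :=
  ∑ q ∈ (f.coeff.support ×ˢ g.coeff.support).filter (fun q => P q.1 q.2),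
    single (q.1 * q.2) (f.coeff q.1 * g.coeff q.2)

theorem mul_eq_sum_restrictedMul [Mul Γ] {ι : Type*} (s : Finset ι) (P : ι → Γ → Γ → Prop)
    (f g : MonoidAlgebra ℂ Γ)
    (hP : ∀ a ∈ f.coeff.support, ∀ b ∈ g.coeff.support, ∃! i, i ∈ s ∧ P i a b) :
    f * g = ∑ i ∈ s, restrictedMul (P i) f g := by
  classical
  simp only [restrictedMul, sum_filter]
  rw [sum_comm, MonoidAlgebra.mul_def]
  simp only [Finsupp.sum]
  rw [← sum_product']
  refine sum_congr rfl fun q hq => ?_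
  obtain ⟨a, b⟩ := q
  obtain ⟨i, ⟨hi, hPi⟩, hunique⟩ := hP a (mem_product.mp hq).1 b (mem_product.mp hq).2
  rw [sum_eq_single_of_mem i hi fun j hj hji => if_neg fun hPj => hji (hunique j ⟨hj, hPj⟩),
    if_pos hPi]

open Classical in
noncomputable def factorPairs [Mul Γ] (P : Γ → Γ → Prop) (f g : MonoidAlgebra ℂ Γ) (c : Γ) :
    Finset (Γ × Γ) :=
  (f.coeff.support ×ˢ g.coeff.support).filter (fun q => P q.1 q.2 ∧ q.1 * q.2 = c)

theorem coeff_restrictedMul [Mul Γ] (P : Γ → Γ → Prop) (f g : MonoidAlgebra ℂ Γ) (c : Γ) :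
    (restrictedMul P f g).coeff c = ∑ q ∈ factorPairs P f g c, f.coeff q.1 * g.coeff q.2 := by
  classical
  rw [restrictedMul, coeff_sum, Finsupp.finsetSum_apply, factorPairs, ← filter_filter,
    sum_filter (p := fun q : Γ × Γ => q.1 * q.2 = c)]
  refine sum_congr rfl fun q _ => ?_
  rw [coeff_single, Finsupp.single_apply]

theorem mem_factorPairs [Mul Γ] {P : Γ → Γ → Prop} {f g : MonoidAlgebra ℂ Γ} {c : Γ}
    {q : Γ × Γ} :
    q ∈ factorPairs P f g c ↔
      (q.1 ∈ f.coeff.support ∧ q.2 ∈ g.coeff.support) ∧ P q.1 q.2 ∧ q.1 * q.2 = c := by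
  simp [factorPairs]

def MulDeterminedByFactors [Mul Γ] (P : Γ → Γ → Prop) : Prop :=
  ∀ ⦃a b a₁ b₁ a₂ b₂ : Γ⦄, P a b₁ → P a₁ b → a * b₁ = a₁ * b →
    P a b₂ → P a₂ b → a * b₂ = a₂ * b → a * b₁ = a * b₂

theorem sq_norm_coeff_restrictedMul_le [CancelMonoid Γ] [DecidableEq Γ] (P : Γ → Γ → Prop)
    (f g : MonoidAlgebra ℂ Γ) (c : Γ) :
    ‖(restrictedMul P f g).coeff c‖ ^ 2 ≤
      ∑ r ∈ (factorPairs P f g c).image Prod.fst ×ˢ (factorPairs P f g c).image Prod.snd,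
        ‖f.coeff r.1‖ ^ 2 * ‖g.coeff r.2‖ ^ 2 := by
  set T := factorPairs P f g c
  have hfst : Set.InjOn Prod.fst (T : Set (Γ × Γ)) := fun q hq q' hq' h => by
    have := (mem_factorPairs.mp hq).2.2.trans (mem_factorPairs.mp hq').2.2.symm
    rw [h] at this
    exact Prod.ext h (mul_left_cancel this)
  have hsnd : Set.InjOn Prod.snd (T : Set (Γ × Γ)) := fun q hq q' hq' h => by
    have := (mem_factorPairs.mp hq).2.2.trans (mem_factorPairs.mp hq').2.2.symm
    rw [h] at this
    exact Prod.ext (mul_right_cancel this) h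
  calc ‖(restrictedMul P f g).coeff c‖ ^ 2
      ≤ (∑ q ∈ T, ‖f.coeff q.1‖ * ‖g.coeff q.2‖) ^ 2 := by
        gcongr
        rw [coeff_restrictedMul]
        exact (norm_sum_le _ _).trans_eq (sum_congr rfl fun _ _ => norm_mul _ _)
    _ ≤ (∑ q ∈ T, ‖f.coeff q.1‖ ^ 2) * ∑ q ∈ T, ‖g.coeff q.2‖ ^ 2 :=
        sum_mul_sq_le_sq_mul_sq _ _ _
    _ = _ := by
        rw [← sum_image hfst (f := fun a => ‖f.coeff a‖ ^ 2),
          ← sum_image hsnd (f := fun b => ‖g.coeff b‖ ^ 2), sum_mul_sum, sum_product]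

theorem l2norm_restrictedMul_le [CancelMonoid Γ] {P : Γ → Γ → Prop}
    (hP : MulDeterminedByFactors P) (f g : MonoidAlgebra ℂ Γ) :
    l2norm (restrictedMul P f g) ≤ l2norm f * l2norm g := by
  classical
  set rect : Γ → Finset (Γ × Γ) := fun c =>
    (factorPairs P f g c).image Prod.fst ×ˢ (factorPairs P f g c).image Prod.snd
  set S := (restrictedMul P f g).coeff.support
  have hdisj : (S : Set Γ).PairwiseDisjoint rect := by
    intro c _ c' _ hne
    refine disjoint_left.mpr fun ⟨a, b⟩ hr hr' => hne ?_
    simp only [rect, mem_product, mem_image, mem_factorPairs] at hr hr'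
    obtain ⟨⟨⟨_, b₁⟩, ⟨-, hP₁, rfl⟩, rfl⟩, ⟨⟨a₁, _⟩, ⟨-, hP₁', hc⟩, rfl⟩⟩ := hr
    obtain ⟨⟨⟨_, b₂⟩, ⟨-, hP₂, rfl⟩, rfl⟩, ⟨⟨a₂, _⟩, ⟨-, hP₂', hc'⟩, rfl⟩⟩ := hr'
    exact hP hP₁ hP₁' hc.symm hP₂ hP₂' hc'.symm
  have hsub : S.biUnion rect ⊆ f.coeff.support ×ˢ g.coeff.support := by
    intro ⟨a, b⟩ hr
    simp only [rect, mem_biUnion, mem_product, mem_image, mem_factorPairs] at hr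
    obtain ⟨-, -, ⟨⟨_, _⟩, ⟨⟨ha, -⟩, -⟩, rfl⟩, ⟨⟨_, _⟩, ⟨⟨-, hb⟩, -⟩, rfl⟩⟩ := hr
    exact mem_product.mpr ⟨ha, hb⟩
  have key : ∑ c ∈ S, ‖(restrictedMul P f g).coeff c‖ ^ 2 ≤
      (∑ a ∈ f.coeff.support, ‖f.coeff a‖ ^ 2) * ∑ b ∈ g.coeff.support, ‖g.coeff b‖ ^ 2 :=
    calc ∑ c ∈ S, ‖(restrictedMul P f g).coeff c‖ ^ 2
        ≤ ∑ c ∈ S, ∑ r ∈ rect c, ‖f.coeff r.1‖ ^ 2 * ‖g.coeff r.2‖ ^ 2 :=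
          sum_le_sum fun c _ => sq_norm_coeff_restrictedMul_le P f g c
      _ = ∑ r ∈ S.biUnion rect, ‖f.coeff r.1‖ ^ 2 * ‖g.coeff r.2‖ ^ 2 :=
          (sum_biUnion hdisj).symm
      _ ≤ ∑ r ∈ f.coeff.support ×ˢ g.coeff.support, ‖f.coeff r.1‖ ^ 2 * ‖g.coeff r.2‖ ^ 2 :=
          sum_le_sum_of_subset_of_nonneg hsub fun _ _ _ => by positivity
      _ = _ := by rw [sum_mul_sum, sum_product]
  rw [l2norm, l2norm, l2norm, ← Real.sqrt_mul (by positivity)]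
  exact Real.sqrt_le_sqrt key

end RestrictedMul

section TreeAction

open SimpleGraph

variable {V Γ : Type*} {T : SimpleGraph V} [Group Γ] [MulAction Γ V]

theorem SimpleGraph.Connected.dist_smul_smul (hT : T.Connected)
    (hadj : ∀ (c : Γ) (u v : V), T.Adj u v → T.Adj (c • u) (c • v)) (c : Γ) (u v : V) :
    T.dist (c • u) (c • v) = T.dist u v := by
  have hle (d : Γ) (x y : V) : T.dist (d • x) (d • y) ≤ T.dist x y := by
    obtain ⟨P, hP⟩ := hT.exists_walk_length_eq_dist x y
    rw [← hP, ← Walk.length_map ⟨(d • ·), hadj d _ _⟩ P]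
    exact dist_le _
  refine (hle c u v).antisymm ?_
  simpa using hle c⁻¹ (c • u) (c • v)

theorem exists_median_smul (hT : T.IsTree)
    (hdist : ∀ (c : Γ) (u v : V), T.dist (c • u) (c • v) = T.dist u v) (v₀ : V) (a b : Γ) :
    ∃ m, T.dist v₀ m + T.dist m (a • v₀) = T.dist v₀ (a • v₀) ∧
      T.dist m (a • v₀) + T.dist m ((a * b) • v₀) = T.dist v₀ (b • v₀) ∧
      T.dist v₀ m + T.dist m ((a * b) • v₀) = T.dist v₀ ((a * b) • v₀) := by
  have hab : T.dist (a • v₀) ((a * b) • v₀) = T.dist v₀ (b • v₀) := by rw [mul_smul, hdist]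
  obtain ⟨m, h₁, h₂, h₃⟩ := hT.exists_median v₀ (a • v₀) ((a * b) • v₀)
  exact ⟨m, h₁, T.dist_comm ▸ hab ▸ h₃, h₂⟩

def HasCancellation (T : SimpleGraph V) (v₀ : V) (n p : ℕ) (a b : Γ) : Prop :=
  T.dist v₀ (b • v₀) = n ∧ T.dist v₀ (a • v₀) + n = T.dist v₀ ((a * b) • v₀) + 2 * p

theorem existsUnique_hasCancellation (hT : T.IsTree)
    (hdist : ∀ (c : Γ) (u v : V), T.dist (c • u) (c • v) = T.dist u v) (v₀ : V) {n : ℕ}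
    (a : Γ) {b : Γ} (hb : T.dist v₀ (b • v₀) = n) :
    ∃! p, p ∈ range (n + 1) ∧ HasCancellation T v₀ n p a b := by
  obtain ⟨m, h₁, h₂, h₃⟩ := exists_median_smul hT hdist v₀ a b
  exact ⟨T.dist m (a • v₀), ⟨mem_range.mpr (by omega), hb, by omega⟩,
    fun p ⟨_, _, hp⟩ => by omega⟩

theorem mulDeterminedByFactors_hasCancellation (hT : T.IsTree)
    (hdist : ∀ (c : Γ) (u v : V), T.dist (c • u) (c • v) = T.dist u v)
    (hfree : ∀ (c : Γ) (x : V), c • x = x → c = 1)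
    (v₀ : V) (n p : ℕ) : MulDeterminedByFactors (HasCancellation (Γ := Γ) T v₀ n p) := by
  rintro a b a₁ b₁ a₂ b₂ ⟨hb₁, h₁⟩ ⟨hb, h₁'⟩ hc ⟨hb₂, h₂⟩ ⟨-, h₂'⟩ hc'
  have hinv (c : Γ) (u w : V) : T.dist u (c⁻¹ • w) = T.dist (c • u) w := by
    rw [← hdist c, smul_inv_smul]
  obtain ⟨m₁, hm₁a, hm₁b, hm₁c⟩ := exists_median_smul hT hdist v₀ a b₁
  obtain ⟨m₁', hm₁a', hm₁b', hm₁c'⟩ := exists_median_smul hT hdist v₀ a₁ b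
  obtain ⟨m₂, hm₂a, hm₂b, hm₂c⟩ := exists_median_smul hT hdist v₀ a b₂
  obtain ⟨m₂', hm₂a', hm₂b', hm₂c'⟩ := exists_median_smul hT hdist v₀ a₂ b
  rw [← hc] at hm₁b' hm₁c' h₁'
  rw [← hc'] at hm₂b' hm₂c' h₂'
  -- the four medians coincide, as points of `[v₀, a b₁ v₀]`, `[v₀, a b₂ v₀]` and `[v₀, a v₀]`
  obtain rfl : m₁ = m₁' := hT.eq_of_dist_add_dist_eq hm₁c hm₁c' (by omega)
  obtain rfl : m₂ = m₂' := hT.eq_of_dist_add_dist_eq hm₂c hm₂c' (by omega)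
  obtain rfl : m₁ = m₂ := hT.eq_of_dist_add_dist_eq hm₁a hm₂a (by omega)
  have hpull (c : Γ) (h : T.dist m₁ (c • v₀) + T.dist m₁ ((c * b) • v₀) = T.dist v₀ (b • v₀)) :
      T.dist v₀ (c⁻¹ • m₁) + T.dist (c⁻¹ • m₁) (b • v₀) = T.dist v₀ (b • v₀) := by
    rwa [hinv, T.dist_comm (u := c⁻¹ • m₁), hinv, ← mul_smul, T.dist_comm (u := c • v₀),
      T.dist_comm (u := (c * b) • v₀)]
  have hfix : (a₂ * a₁⁻¹) • m₁ = m₁ := by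
    have hdist_eq : T.dist v₀ (a₁⁻¹ • m₁) = T.dist v₀ (a₂⁻¹ • m₁) := by
      rw [hinv, hinv, T.dist_comm (u := a₁ • v₀), T.dist_comm (u := a₂ • v₀)]
      omega
    rw [mul_smul, hT.eq_of_dist_add_dist_eq (hpull a₁ (hc ▸ hm₁b')) (hpull a₂ (hc' ▸ hm₂b'))
      hdist_eq, smul_inv_smul]
  rw [hc, hc', eq_comm, ← mul_inv_eq_one.mp (hfree _ _ hfix)]

end TreeAction

/-- Haagerup's inequality for a group acting freely on the vertices of a tree:
with length `|c| = d(v₀, c • v₀)`, if `g` is supported on elements of length `n`,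
then `‖f * g‖₂ ≤ (n+1) ‖f‖₂ ‖g‖₂`. -/
theorem haagerup_inequality_tree {V : Type*} (T : SimpleGraph V) (hT : T.IsTree)
    {Γ : Type*} [Group Γ] [MulAction Γ V]
    (haut : ∀ (c : Γ) (u v : V), T.Adj u v ↔ T.Adj (c • u) (c • v))
    (hfree : ∀ (c : Γ) (x : V), c • x = x → c = 1)
    (v₀ : V) (n : ℕ)
    (g : MonoidAlgebra ℂ Γ)
    (hg : ∀ c ∈ g.coeff.support, T.dist v₀ (c • v₀) = n)
    (f : MonoidAlgebra ℂ Γ) :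
    l2norm (f * g) ≤ (n + 1 : ℝ) * l2norm f * l2norm g := by
  have hdist := hT.connected.dist_smul_smul fun c u v => (haut c u v).mp
  have hsplit : f * g = ∑ p ∈ range (n + 1), restrictedMul (HasCancellation T v₀ n p) f g :=
    mul_eq_sum_restrictedMul _ _ f g fun a _ b hb =>
      existsUnique_hasCancellation hT hdist v₀ a (hg b hb)
  calc l2norm (f * g)
      ≤ ∑ p ∈ range (n + 1), l2norm (restrictedMul (HasCancellation T v₀ n p) f g) :=
        hsplit ▸ l2norm_sum_le _ _
    _ ≤ ∑ p ∈ range (n + 1), l2norm f * l2norm g :=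
        sum_le_sum fun p _ => l2norm_restrictedMul_le
          (mulDeterminedByFactors_hasCancellation hT hdist hfree v₀ n p) f g
    _ = (n + 1 : ℝ) * l2norm f * l2norm g := by
        rw [sum_const, card_range, nsmul_eq_mul]
        push_cast
        ring
end

section
/- Let H and K be Hilbert spaces with orthogonal decompositions H = ⊕_{j∈J} H_j and K = ⊕_{k∈K'} K_k (families of pairwise orthogonal closed subspaces whose closed linear span is the whole space). Let T : H → K be a bounded linear operator and for each j ∈ J, k ∈ K' let T_{kj} = P_k ∘ T ∘ ι_j : H_j → K_k, where ι_j is the inclusion of H_j and P_k is the orthogonal projection onto K_k. Suppose A : ℓ²(J) → ℓ²(K') is a bounded linear operator whose matrix coefficients with respect to the standard orthonormal bases satisfy ⟨A δ_j, δ_k⟩ = ‖T_{kj}‖ for all j ∈ J and k ∈ K'. Then ‖T‖ ≤ ‖A‖. -/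
open scoped ENNReal InnerProductSpace

/-! If `x = ∑ xⱼ` and `y = ∑ yₖ` are finite sums with `xⱼ ∈ Hⱼ`, `yₖ ∈ Kₖ`, then
`|⟪T x, y⟫| ≤ ∑ ‖T_{kj}‖ ‖xⱼ‖ ‖yₖ‖ = ⟪A a, b⟫` for `a = ∑ ‖xⱼ‖ δⱼ` and `b = ∑ ‖yₖ‖ δₖ`.
By orthogonality `‖a‖ = ‖x‖` and `‖b‖ = ‖y‖`, so `|⟪T x, y⟫| ≤ ‖A‖ ‖x‖ ‖y‖`. Such finite sums
are dense in `H` and in `K`, hence the bound holds for all `x`, `y`, and `‖T‖ ≤ ‖A‖`. -/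

section

variable {𝕜 E F : Type*} [RCLike 𝕜]
  [NormedAddCommGroup E] [InnerProductSpace 𝕜 E] [NormedAddCommGroup F] [InnerProductSpace 𝕜 F]

theorem ContinuousLinearMap.opNorm_le_of_dense_of_norm_inner_le
    {T : E →L[𝕜] F} {s : Set E} {t : Set F} (hs : Dense s) (ht : Dense t) {C : ℝ} (hC : 0 ≤ C)
    (h : ∀ x ∈ s, ∀ y ∈ t, ‖⟪T x, y⟫_𝕜‖ ≤ C * ‖x‖ * ‖y‖) : ‖T‖ ≤ C := by
  have hclosed : IsClosed {p : E × F | ‖⟪T p.1, p.2⟫_𝕜‖ ≤ C * ‖p.1‖ * ‖p.2‖} :=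
    isClosed_le (by fun_prop) (by fun_prop)
  have hbound (x : E) (y : F) : ‖⟪T x, y⟫_𝕜‖ ≤ C * ‖x‖ * ‖y‖ :=
    closure_minimal (fun p hp => h p.1 hp.1 p.2 hp.2) hclosed (hs.prod ht (x, y))
  refine opNorm_le_of_re_inner_le hC fun x y hx hy => ?_
  simpa [hx, hy] using (RCLike.re_le_norm ⟪T x, y⟫_𝕜).trans (hbound x y)

theorem norm_inner_apply_le_opNorm_block (T : E →L[𝕜] F) (V : Submodule 𝕜 E)
    (W : Submodule 𝕜 F) [W.HasOrthogonalProjection] (x : V) (y : W) :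
    ‖⟪T x, (y : F)⟫_𝕜‖ ≤ ‖W.orthogonalProjectionOnto ∘L T ∘L V.subtypeL‖ * ‖x‖ * ‖y‖ := by
  rw [← W.inner_orthogonalProjectionOnto_eq_of_mem_right y]
  calc ‖⟪W.orthogonalProjectionOnto (T x), y⟫_𝕜‖
      ≤ ‖(W.orthogonalProjectionOnto ∘L T ∘L V.subtypeL) x‖ * ‖y‖ := norm_inner_le_norm _ _
    _ ≤ ‖W.orthogonalProjectionOnto ∘L T ∘L V.subtypeL‖ * ‖x‖ * ‖y‖ := by
      gcongr; exact ContinuousLinearMap.le_opNorm _ _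

theorem OrthogonalFamily.norm_sum_smul_lp_single {ι : Type*} [DecidableEq ι] {G : ι → Type*}
    [∀ i, NormedAddCommGroup (G i)] [∀ i, InnerProductSpace 𝕜 (G i)] {V : ∀ i, G i →ₗᵢ[𝕜] E}
    (hV : OrthogonalFamily 𝕜 G V) (l : ∀ i, G i) (s : Finset ι) :
    ‖∑ i ∈ s, (‖l i‖ : 𝕜) • lp.single 2 i (1 : 𝕜)‖ = ‖∑ i ∈ s, V i (l i)‖ := by
  have h := lp.norm_sum_single (p := 2) (by norm_num) (fun i => (‖l i‖ : 𝕜)) s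
  simp only [ENNReal.toReal_ofNat, Real.rpow_two, RCLike.norm_ofReal, sq_abs] at h
  simp_rw [← lp.single_smul, smul_eq_mul, mul_one]
  rw [← sq_eq_sq₀ (norm_nonneg _) (norm_nonneg _), h, hV.norm_sum]

variable {ι κ : Type*} [DecidableEq ι] [DecidableEq κ]
  {V : ι → Submodule 𝕜 E} {W : κ → Submodule 𝕜 F} [∀ k, (W k).HasOrthogonalProjection]

theorem norm_inner_apply_le_of_block_opNorm_matrix
    (hV : OrthogonalFamily 𝕜 (fun i => V i) fun i => (V i).subtypeₗᵢ)
    (hW : OrthogonalFamily 𝕜 (fun k => W k) fun k => (W k).subtypeₗᵢ)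
    (T : E →L[𝕜] F) (A : lp (fun _ : ι => 𝕜) 2 →L[𝕜] lp (fun _ : κ => 𝕜) 2)
    (hA : ∀ i k, ⟪A (lp.single 2 i 1), lp.single 2 k 1⟫_𝕜 =
      (‖(W k).orthogonalProjectionOnto ∘L T ∘L (V i).subtypeL‖ : 𝕜))
    {x : E} (hx : x ∈ ⨆ i, V i) {y : F} (hy : y ∈ ⨆ k, W k) :
    ‖⟪T x, y⟫_𝕜‖ ≤ ‖A‖ * ‖x‖ * ‖y‖ := by
  obtain ⟨f, hf, rfl⟩ := (Submodule.mem_iSup_iff_exists_finsupp _ _).mp hx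
  obtain ⟨g, hg, rfl⟩ := (Submodule.mem_iSup_iff_exists_finsupp _ _).mp hy
  set a := ∑ i ∈ f.support, (‖f i‖ : 𝕜) • lp.single 2 i (1 : 𝕜)
  set b := ∑ k ∈ g.support, (‖g k‖ : 𝕜) • lp.single 2 k (1 : 𝕜)
  have hAab : ⟪A a, b⟫_𝕜 = ((∑ i ∈ f.support, ∑ k ∈ g.support,
      ‖(W k).orthogonalProjectionOnto ∘L T ∘L (V i).subtypeL‖ * ‖f i‖ * ‖g k‖ : ℝ) : 𝕜) := by
    rw [map_sum, sum_inner]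
    simp_rw [b, inner_sum, map_smul, inner_smul_left, inner_smul_right, hA, RCLike.conj_ofReal]
    push_cast
    exact Finset.sum_congr rfl fun i _ => Finset.sum_congr rfl fun k _ => by ring
  have ha : ‖a‖ = ‖f.sum fun _ v => v‖ :=
    hV.norm_sum_smul_lp_single (fun i => ⟨f i, hf i⟩) f.support
  have hb : ‖b‖ = ‖g.sum fun _ v => v‖ :=
    hW.norm_sum_smul_lp_single (fun k => ⟨g k, hg k⟩) g.support
  calc ‖⟪T (f.sum fun _ v => v), g.sum fun _ v => v⟫_𝕜‖
      = ‖∑ i ∈ f.support, ∑ k ∈ g.support, ⟪T (f i), g k⟫_𝕜‖ := by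
        rw [Finsupp.sum, Finsupp.sum, map_sum, sum_inner]
        simp_rw [inner_sum]
    _ ≤ ∑ i ∈ f.support, ∑ k ∈ g.support, ‖⟪T (f i), g k⟫_𝕜‖ :=
        (norm_sum_le _ _).trans (Finset.sum_le_sum fun i _ => norm_sum_le _ _)
    _ ≤ ∑ i ∈ f.support, ∑ k ∈ g.support,
          ‖(W k).orthogonalProjectionOnto ∘L T ∘L (V i).subtypeL‖ * ‖f i‖ * ‖g k‖ := by
        gcongr with i _ k _
        exact norm_inner_apply_le_opNorm_block T (V i) (W k) ⟨f i, hf i⟩ ⟨g k, hg k⟩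
    _ = ‖⟪A a, b⟫_𝕜‖ := by rw [hAab, RCLike.norm_ofReal, abs_of_nonneg (by positivity)]
    _ ≤ ‖A a‖ * ‖b‖ := norm_inner_le_norm _ _
    _ ≤ ‖A‖ * ‖a‖ * ‖b‖ := by gcongr; exact A.le_opNorm a
    _ = _ := by rw [ha, hb]

end

theorem opNorm_le_opNorm_of_matrix_of_block_opNorms_general
    {H K : Type*}
    [NormedAddCommGroup H] [InnerProductSpace ℂ H]
    [NormedAddCommGroup K] [InnerProductSpace ℂ K]
    {J K' : Type*} [DecidableEq J] [DecidableEq K']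
    (Hsub : J → Submodule ℂ H) (Ksub : K' → Submodule ℂ K)
    [∀ k, CompleteSpace (Ksub k)]
    (hHorth : ∀ i j, i ≠ j → ∀ x ∈ Hsub i, ∀ y ∈ Hsub j, ⟪x, y⟫_ℂ = 0)
    (hKorth : ∀ i j, i ≠ j → ∀ x ∈ Ksub i, ∀ y ∈ Ksub j, ⟪x, y⟫_ℂ = 0)
    (hHspan : (⨆ j, Hsub j).topologicalClosure = ⊤)
    (hKspan : (⨆ k, Ksub k).topologicalClosure = ⊤)
    (T : H →L[ℂ] K)
    (A : lp (fun _ : J => ℂ) 2 →L[ℂ] lp (fun _ : K' => ℂ) 2)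
    (hA : ∀ (j : J) (k : K'),
      ⟪A (lp.single 2 j (1 : ℂ)), lp.single 2 k (1 : ℂ)⟫_ℂ =
        (‖(Ksub k).orthogonalProjection.comp (T.comp (Hsub j).subtypeL)‖ : ℂ)) :
    ‖T‖ ≤ ‖A‖ := by
  have hH : OrthogonalFamily ℂ (fun j => Hsub j) fun j => (Hsub j).subtypeₗᵢ :=
    fun i j hij x y => hHorth i j hij x x.2 y y.2
  have hK : OrthogonalFamily ℂ (fun k => Ksub k) fun k => (Ksub k).subtypeₗᵢ :=
    fun i j hij x y => hKorth i j hij x x.2 y y.2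
  exact T.opNorm_le_of_dense_of_norm_inner_le
    (Submodule.dense_iff_topologicalClosure_eq_top.mpr hHspan)
    (Submodule.dense_iff_topologicalClosure_eq_top.mpr hKspan) (norm_nonneg A)
    fun x hx y hy => norm_inner_apply_le_of_block_opNorm_matrix hH hK T A hA hx hy

/-- Lemma B of Ramagge–Robertson–Steger (first inequality): if `T : H → K` is a
bounded operator between Hilbert spaces with orthogonal decompositions
`H = ⊕ⱼ Hⱼ`, `K = ⊕ₖ Kₖ`, with blocks `T_{kj} = Pₖ ∘ T ∘ ιⱼ`, and if
`A : ℓ²(J) → ℓ²(K')` is a bounded operator whose matrix coefficients are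
`⟨A δⱼ, δₖ⟩ = ‖T_{kj}‖`, then `‖T‖ ≤ ‖A‖`. -/
theorem opNorm_le_opNorm_of_matrix_of_block_opNorms
    {H K : Type*}
    [NormedAddCommGroup H] [InnerProductSpace ℂ H] [CompleteSpace H]
    [NormedAddCommGroup K] [InnerProductSpace ℂ K] [CompleteSpace K]
    {J K' : Type*} [DecidableEq J] [DecidableEq K']
    (Hsub : J → Submodule ℂ H) (Ksub : K' → Submodule ℂ K)
    [∀ j, CompleteSpace (Hsub j)] [∀ k, CompleteSpace (Ksub k)]
    (hHorth : ∀ i j, i ≠ j → ∀ x ∈ Hsub i, ∀ y ∈ Hsub j, ⟪x, y⟫_ℂ = 0)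
    (hKorth : ∀ i j, i ≠ j → ∀ x ∈ Ksub i, ∀ y ∈ Ksub j, ⟪x, y⟫_ℂ = 0)
    (hHspan : (⨆ j, Hsub j).topologicalClosure = ⊤)
    (hKspan : (⨆ k, Ksub k).topologicalClosure = ⊤)
    (T : H →L[ℂ] K)
    (A : lp (fun _ : J => ℂ) 2 →L[ℂ] lp (fun _ : K' => ℂ) 2)
    (hA : ∀ (j : J) (k : K'),
      ⟪A (lp.single 2 j (1 : ℂ)), lp.single 2 k (1 : ℂ)⟫_ℂ =
        (‖(Ksub k).orthogonalProjection.comp (T.comp (Hsub j).subtypeL)‖ : ℂ)) :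
    ‖T‖ ≤ ‖A‖ :=
  opNorm_le_opNorm_of_matrix_of_block_opNorms_general Hsub Ksub hHorth hKorth hHspan hKspan T A hA
end

section
/- Let I and J be index sets and let T, S : ℓ²(I) → ℓ²(J) be bounded linear operators whose matrix coefficients t_{ji} = ⟨T δ_i, δ_j⟩ and s_{ji} = ⟨S δ_i, δ_j⟩ are real and satisfy 0 ≤ t_{ji} ≤ s_{ji} for all i ∈ I and j ∈ J. Then ‖T‖ ≤ ‖S‖. -/
/-!
Expanding `x = ∑ xᵢ δᵢ` gives `(T x)ⱼ = ∑ᵢ xᵢ tⱼᵢ`, hence `|(T x)ⱼ| ≤ ∑ᵢ |xᵢ| sⱼᵢ = (S |x|)ⱼ` for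
every `j`. The `ℓᵖ` norm is monotone in the moduli of the coordinates and `‖ |x| ‖ = ‖x‖`, so
`‖T x‖ ≤ ‖S |x|‖ ≤ ‖S‖ ‖x‖`.
-/

open scoped ComplexOrder InnerProductSpace ENNReal

theorem Complex.norm_le_re_of_nonneg_of_le {z w : ℂ} (hz : 0 ≤ z) (hzw : z ≤ w) : ‖z‖ ≤ w.re :=
  Complex.re_eq_norm.mpr hz ▸ (Complex.le_def.mp hzw).1

namespace lp

variable {I J : Type*} {p q : ℝ≥0∞}

noncomputable def abs (x : lp (fun _ : I => ℂ) p) : lp (fun _ : I => ℂ) p :=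
  ⟨fun i => (‖x i‖ : ℂ), (lp.memℓp x).mono' fun i => by simp⟩

@[simp]
theorem abs_apply (x : lp (fun _ : I => ℂ) p) (i : I) : abs x i = ‖x i‖ := rfl

variable [Fact (1 ≤ p)]

@[simp]
theorem norm_abs (x : lp (fun _ : I => ℂ) p) : ‖abs x‖ = ‖x‖ := by
  have hp : p ≠ 0 := (zero_lt_one.trans_le Fact.out).ne'
  exact le_antisymm (lp.norm_mono hp fun i => by simp) (lp.norm_mono hp fun i => by simp)

variable [DecidableEq I] [Fact (1 ≤ q)]

theorem hasSum_mul_apply_single (hp : p ≠ ∞)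
    (T : lp (fun _ : I => ℂ) p →L[ℂ] lp (fun _ : J => ℂ) q) (x : lp (fun _ : I => ℂ) p) (j : J) :
    HasSum (fun i => x i * T (lp.single p i 1) j) (T x j) := by
  have hterm (i : I) : (lp.evalCLM ℂ (fun _ : J => ℂ) q j ∘L T) (lp.single p i (x i)) =
      x i * T (lp.single p i 1) j := by
    have hsingle : lp.single p i (x i) = x i • lp.single (E := fun _ : I => ℂ) p i 1 := by
      rw [← lp.single_smul, smul_eq_mul, mul_one]
    rw [hsingle, map_smul]
    rfl
  have hsum := (lp.hasSum_single hp x).mapL (lp.evalCLM ℂ (fun _ : J => ℂ) q j ∘L T)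
  simp only [hterm] at hsum
  exact hsum

theorem norm_apply_le_norm_apply_abs (hp : p ≠ ∞)
    {T S : lp (fun _ : I => ℂ) p →L[ℂ] lp (fun _ : J => ℂ) q}
    (h0 : ∀ i j, 0 ≤ T (lp.single p i 1) j)
    (hle : ∀ i j, T (lp.single p i 1) j ≤ S (lp.single p i 1) j)
    (x : lp (fun _ : I => ℂ) p) (j : J) :
    ‖T x j‖ ≤ ‖S (abs x) j‖ := by
  have hS := Complex.reCLM.hasSum (hasSum_mul_apply_single hp S (abs x) j)
  simp only [abs_apply, Complex.reCLM_apply, Complex.re_ofReal_mul] at hS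
  calc ‖T x j‖ ≤ (S (abs x) j).re :=
        (hasSum_mul_apply_single hp T x j).norm_le_of_bounded hS fun i => by
          rw [norm_mul]
          exact mul_le_mul_of_nonneg_left (Complex.norm_le_re_of_nonneg_of_le (h0 i j) (hle i j))
            (norm_nonneg _)
    _ ≤ ‖S (abs x) j‖ := Complex.re_le_norm _

theorem opNorm_le_opNorm_of_apply_single_le (hp : p ≠ ∞)
    {T S : lp (fun _ : I => ℂ) p →L[ℂ] lp (fun _ : J => ℂ) q}
    (h0 : ∀ i j, 0 ≤ T (lp.single p i 1) j)
    (hle : ∀ i j, T (lp.single p i 1) j ≤ S (lp.single p i 1) j) :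
    ‖T‖ ≤ ‖S‖ :=
  T.opNorm_le_bound (norm_nonneg S) fun x => calc
    ‖T x‖ ≤ ‖S (abs x)‖ :=
      lp.norm_mono (zero_lt_one.trans_le Fact.out).ne' (norm_apply_le_norm_apply_abs hp h0 hle x)
    _ ≤ ‖S‖ * ‖x‖ := norm_abs x ▸ S.le_opNorm (abs x)

end lp

/-- Lemma C of Ramagge–Robertson–Steger: if `T, S : ℓ²(I) → ℓ²(J)` are bounded
operators whose matrix coefficients `t_{ji} = ⟨T δᵢ, δⱼ⟩`, `s_{ji} = ⟨S δᵢ, δⱼ⟩`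
satisfy `0 ≤ t_{ji} ≤ s_{ji}` (so in particular all are real), then `‖T‖ ≤ ‖S‖`. -/
theorem opNorm_le_opNorm_of_entrywise_le
    {I J : Type*} [DecidableEq I] [DecidableEq J]
    (T S : lp (fun _ : I => ℂ) 2 →L[ℂ] lp (fun _ : J => ℂ) 2)
    (h : ∀ (i : I) (j : J),
      0 ≤ ⟪T (lp.single 2 i (1 : ℂ)), lp.single 2 j (1 : ℂ)⟫_ℂ ∧
        ⟪T (lp.single 2 i (1 : ℂ)), lp.single 2 j (1 : ℂ)⟫_ℂ ≤
          ⟪S (lp.single 2 i (1 : ℂ)), lp.single 2 j (1 : ℂ)⟫_ℂ) :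
    ‖T‖ ≤ ‖S‖ := by
  simp only [lp.inner_single_right, RCLike.inner_apply, one_mul, starRingEnd_apply,
    star_nonneg_iff] at h
  exact lp.opNorm_le_opNorm_of_apply_single_le ENNReal.ofNat_ne_top (fun i j => (h i j).1)
    fun i j => star_le_star_iff.mp (h i j).2
end

section
/- Let T₁ and T₂ be trees with vertex sets V₁ and V₂, and let Γ be an Ã₁×Ã₁ group, i.e. a group of shape-preserving bijections of V₁×V₂ acting simply transitively on V₁×V₂. Fix a vertex v₀ ∈ V₁×V₂ and define sh(c) = sh(v₀, c·v₀) for c ∈ Γ. Let m₁, m₂, n₁, n₂ ∈ ℕ and let c ∈ Γ with sh(c) = (m₁+m₂, n₁+n₂). Then there exist unique elements a, b ∈ Γ such that c = ab, sh(a) = (m₁,n₁) and sh(b) = (m₂,n₂). -/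
/-! Since `Γ` acts simply transitively, `a ↦ a • v₀` identifies `Γ` with `V₁ × V₂`, and a
factorization `c = a * b` is determined by the point `x = a • v₀`. Invariance of the shape gives
`sh(b) = sh(a • v₀, a • b • v₀) = sh(x, c • v₀)`, so the required factorizations correspond to the
points `x` with `sh(v₀, x) = (m₁, n₁)` and `sh(x, c • v₀) = (m₂, n₂)`. In each tree such a
coordinate is the vertex at distance `m₁` (resp. `n₁`) from `v₀` on the geodesic to `c • v₀`,
which is unique because geodesics in a tree are unique. -/

/-- The shape of an ordered pair of vertices in a product of two trees. -/
noncomputable def shape {V₁ V₂ : Type*} (T₁ : SimpleGraph V₁) (T₂ : SimpleGraph V₂)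
    (u v : V₁ × V₂) : ℕ × ℕ :=
  (T₁.dist u.1 v.1, T₂.dist u.2 v.2)

namespace SimpleGraph

variable {V : Type*} {G : SimpleGraph V}

theorem Connected.exists_dist_eq_and_dist_eq (hG : G.Connected) {u w : V} {m₁ m₂ : ℕ}
    (h : G.dist u w = m₁ + m₂) : ∃ x, G.dist u x = m₁ ∧ G.dist x w = m₂ := by
  obtain ⟨p, hp⟩ := hG.exists_walk_length_eq_dist u w
  have h₁ : G.dist u (p.getVert m₁) ≤ m₁ := (dist_le (p.take m₁)).trans (by simp)
  have h₂ : G.dist (p.getVert m₁) w ≤ m₂ := by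
    simpa [hp, h] using dist_le (p.drop m₁)
  have := hG.dist_triangle (u := u) (v := p.getVert m₁) (w := w)
  exact ⟨p.getVert m₁, by omega, by omega⟩

theorem IsTree.eq_getVert_of_dist_add_dist_eq (hG : G.IsTree) {u w y : V} {p : G.Walk u w}
    (hp : p.IsPath) (h : G.dist u y + G.dist y w = G.dist u w) : y = p.getVert (G.dist u y) := by
  -- geodesics `u ⟶ y ⟶ w` concatenate to a path, which must be `p`
  obtain ⟨q, hq⟩ := hG.connected.exists_walk_length_eq_dist u y
  obtain ⟨r, hr⟩ := hG.connected.exists_walk_length_eq_dist y w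
  have hqr : (q.append r).IsPath :=
    (q.append r).isPath_of_length_eq_dist (by rw [Walk.length_append, hq, hr, h])
  rw [(hG.existsUnique_path u w).unique hp hqr, Walk.getVert_append, ← hq]
  simp

theorem IsTree.existsUnique_dist_eq_and_dist_eq (hG : G.IsTree) {u w : V} {m₁ m₂ : ℕ}
    (h : G.dist u w = m₁ + m₂) : ∃! x, G.dist u x = m₁ ∧ G.dist x w = m₂ := by
  obtain ⟨x, hx⟩ := hG.connected.exists_dist_eq_and_dist_eq h
  obtain ⟨p, hp⟩ := hG.connected.exists_walk_length_eq_dist u w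
  have hpath := p.isPath_of_length_eq_dist hp
  refine ⟨x, hx, fun y hy => ?_⟩
  rw [hG.eq_getVert_of_dist_add_dist_eq hpath (y := y) (by omega),
    hG.eq_getVert_of_dist_add_dist_eq hpath (y := x) (by omega), hx.1, hy.1]

end SimpleGraph

theorem existsUnique_shape_eq_and_shape_eq {V₁ V₂ : Type*} {T₁ : SimpleGraph V₁}
    {T₂ : SimpleGraph V₂} (hT₁ : T₁.IsTree) (hT₂ : T₂.IsTree) {u w : V₁ × V₂} {m₁ m₂ n₁ n₂ : ℕ}
    (h : shape T₁ T₂ u w = (m₁ + m₂, n₁ + n₂)) :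
    ∃! x, shape T₁ T₂ u x = (m₁, n₁) ∧ shape T₁ T₂ x w = (m₂, n₂) := by
  simp only [shape, Prod.mk.injEq] at h ⊢
  obtain ⟨x₁, hx₁, hx₁u⟩ := hT₁.existsUnique_dist_eq_and_dist_eq h.1
  obtain ⟨x₂, hx₂, hx₂u⟩ := hT₂.existsUnique_dist_eq_and_dist_eq h.2
  exact ⟨(x₁, x₂), by tauto,
    fun y hy => Prod.ext (hx₁u _ ⟨hy.1.1, hy.2.1⟩) (hx₂u _ ⟨hy.1.2, hy.2.2⟩)⟩

theorem existsUnique_mul_eq_iff {Γ : Type*} [Group Γ] (c : Γ) (Q : Γ → Γ → Prop) :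
    (∃! p : Γ × Γ, p.1 * p.2 = c ∧ Q p.1 p.2) ↔ ∃! a, Q a (a⁻¹ * c) := by
  constructor
  · rintro ⟨⟨a, b⟩, ⟨rfl, hQ⟩, hu⟩
    refine ⟨a, by simpa using hQ, fun a' ha' => ?_⟩
    exact congrArg Prod.fst (hu (a', a'⁻¹ * (a * b)) ⟨by group, ha'⟩)
  · rintro ⟨a, hQ, hu⟩
    refine ⟨(a, a⁻¹ * c), ⟨by group, hQ⟩, ?_⟩
    rintro ⟨a', b'⟩ ⟨rfl, hQ'⟩
    obtain rfl : a' = a := hu a' (by simpa using hQ')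
    simp

theorem MulAction.bijective_smul_of_existsUnique {Γ X : Type*} [Group Γ] [MulAction Γ X]
    (hst : ∀ x y : X, ∃! c : Γ, c • x = y) (x : X) : Function.Bijective (· • x : Γ → X) :=
  ⟨fun _ _ hab => (hst x _).unique rfl hab.symm, fun y => (hst x y).exists⟩

theorem existsUnique_mul_eq_of_existsUnique_midpoint {Γ X S : Type*} [Group Γ] [MulAction Γ X]
    (f : X → X → S) (hf : ∀ (c : Γ) (u v : X), f (c • u) (c • v) = f u v)
    (hst : ∀ x y : X, ∃! c : Γ, c • x = y) (v₀ : X) (c : Γ) {s t : S}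
    (h : ∃! x, f v₀ x = s ∧ f x (c • v₀) = t) :
    ∃! p : Γ × Γ, p.1 * p.2 = c ∧ f v₀ (p.1 • v₀) = s ∧ f v₀ (p.2 • v₀) = t := by
  have hcofactor (a : Γ) : f v₀ ((a⁻¹ * c) • v₀) = f (a • v₀) (c • v₀) := by
    rw [← hf a, smul_smul, mul_inv_cancel_left]
  rw [existsUnique_mul_eq_iff c (fun a b => f v₀ (a • v₀) = s ∧ f v₀ (b • v₀) = t)]
  simpa only [hcofactor] using (MulAction.bijective_smul_of_existsUnique hst v₀).existsUnique_iff.1 h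

/-- Shape decomposition in an `Ã₁×Ã₁` group: if `Γ` is a group of shape-preserving
bijections acting simply transitively on the vertices of a product of two trees,
`sh(c) = sh(v₀, c • v₀)`, and `sh(c) = (m₁+m₂, n₁+n₂)`, then there is a unique pair
`(a, b)` with `c = a * b`, `sh(a) = (m₁,n₁)` and `sh(b) = (m₂,n₂)`. -/
theorem shape_decomposition_for_group {V₁ V₂ : Type*}
    (T₁ : SimpleGraph V₁) (T₂ : SimpleGraph V₂)
    (hT₁ : T₁.IsTree) (hT₂ : T₂.IsTree)
    {Γ : Type*} [Group Γ] [MulAction Γ (V₁ × V₂)]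
    (hsh : ∀ (c : Γ) (u v : V₁ × V₂), shape T₁ T₂ (c • u) (c • v) = shape T₁ T₂ u v)
    (hst : ∀ x y : V₁ × V₂, ∃! c : Γ, c • x = y)
    (v₀ : V₁ × V₂) (m₁ m₂ n₁ n₂ : ℕ) (c : Γ)
    (hc : shape T₁ T₂ v₀ (c • v₀) = (m₁ + m₂, n₁ + n₂)) :
    ∃! p : Γ × Γ, p.1 * p.2 = c ∧
      shape T₁ T₂ v₀ (p.1 • v₀) = (m₁, n₁) ∧
      shape T₁ T₂ v₀ (p.2 • v₀) = (m₂, n₂) :=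
  existsUnique_mul_eq_of_existsUnique_midpoint (shape T₁ T₂) hsh hst v₀ c
    (existsUnique_shape_eq_and_shape_eq hT₁ hT₂ hc)
end

section
/- Let T₁ and T₂ be trees with nonempty vertex sets V₁ and V₂, and let a : V₁×V₂ → V₁×V₂ be a shape-preserving bijection, i.e. sh(a·u, a·v) = sh(u,v) for all u, v ∈ V₁×V₂. Then there exist bijections a₁ : V₁ → V₁ and a₂ : V₂ → V₂ with d(a₁u, a₁u') = d(u,u') for all u, u' ∈ V₁ and d(a₂v, a₂v') = d(v,v') for all v, v' ∈ V₂, such that a·(u,v) = (a₁u, a₂v) for all (u,v) ∈ V₁×V₂. -/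
/-!
Since the factor graphs are connected, distance `0` means equality, so a shape-preserving map
sends pairs with the same first (resp. second) coordinate to pairs with the same first
(resp. second) coordinate. Hence it factors as `Prod.map a₁ a₂`, the factors inherit bijectivity
from `a`, and restricting `a` to a horizontal (resp. vertical) slice shows that they preserve
distances.
-/

theorem exists_eq_prodMap_of_congr {α β γ δ : Type*} [Nonempty α] [Nonempty β]
    (a : α × β → γ × δ) (h₁ : ∀ p q : α × β, p.1 = q.1 → (a p).1 = (a q).1)
    (h₂ : ∀ p q : α × β, p.2 = q.2 → (a p).2 = (a q).2) :
    ∃ (a₁ : α → γ) (a₂ : β → δ), a = Prod.map a₁ a₂ := by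
  obtain ⟨u₀⟩ := ‹Nonempty α›
  obtain ⟨v₀⟩ := ‹Nonempty β›
  exact ⟨fun u ↦ (a (u, v₀)).1, fun v ↦ (a (u₀, v)).2,
    funext fun p ↦ Prod.ext (h₁ p (p.1, v₀) rfl) (h₂ p (u₀, p.2) rfl)⟩

section ShapePreserving

variable {V₁ V₂ : Type*} {T₁ : SimpleGraph V₁} {T₂ : SimpleGraph V₂} {a : V₁ × V₂ → V₁ × V₂}

theorem fst_congr_of_shape_preserving (hT₁ : T₁.Connected)
    (hsh : ∀ u v : V₁ × V₂, shape T₁ T₂ (a u) (a v) = shape T₁ T₂ u v)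
    {p q : V₁ × V₂} (hpq : p.1 = q.1) : (a p).1 = (a q).1 := by
  have hdist : T₁.dist (a p).1 (a q).1 = T₁.dist p.1 q.1 := congrArg Prod.fst (hsh p q)
  rwa [hpq, SimpleGraph.dist_self, hT₁.dist_eq_zero_iff] at hdist

theorem snd_congr_of_shape_preserving (hT₂ : T₂.Connected)
    (hsh : ∀ u v : V₁ × V₂, shape T₁ T₂ (a u) (a v) = shape T₁ T₂ u v)
    {p q : V₁ × V₂} (hpq : p.2 = q.2) : (a p).2 = (a q).2 := by
  have hdist : T₂.dist (a p).2 (a q).2 = T₂.dist p.2 q.2 := congrArg Prod.snd (hsh p q)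
  rwa [hpq, SimpleGraph.dist_self, hT₂.dist_eq_zero_iff] at hdist

end ShapePreserving

/-- Every shape-preserving bijection of the vertex set of a product of two
(nonempty) trees is a Cartesian product of distance-preserving bijections of the
two factors. -/
theorem shape_preserving_bijection_is_product {V₁ V₂ : Type*}
    [Nonempty V₁] [Nonempty V₂]
    (T₁ : SimpleGraph V₁) (T₂ : SimpleGraph V₂)
    (hT₁ : T₁.IsTree) (hT₂ : T₂.IsTree)
    (a : V₁ × V₂ → V₁ × V₂) (ha : Function.Bijective a)
    (hsh : ∀ u v : V₁ × V₂, shape T₁ T₂ (a u) (a v) = shape T₁ T₂ u v) :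
    ∃ (a₁ : V₁ → V₁) (a₂ : V₂ → V₂),
      Function.Bijective a₁ ∧ Function.Bijective a₂ ∧
      (∀ u u' : V₁, T₁.dist (a₁ u) (a₁ u') = T₁.dist u u') ∧
      (∀ v v' : V₂, T₂.dist (a₂ v) (a₂ v') = T₂.dist v v') ∧
      ∀ p : V₁ × V₂, a p = (a₁ p.1, a₂ p.2) := by
  obtain ⟨a₁, a₂, rfl⟩ := exists_eq_prodMap_of_congr a
    (fun _ _ ↦ fst_congr_of_shape_preserving hT₁.connected hsh)
    (fun _ _ ↦ snd_congr_of_shape_preserving hT₂.connected hsh)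
  obtain ⟨u₀⟩ := ‹Nonempty V₁›
  obtain ⟨v₀⟩ := ‹Nonempty V₂›
  exact ⟨a₁, a₂, (Prod.map_bijective.mp ha).1, (Prod.map_bijective.mp ha).2,
    fun u u' ↦ congrArg Prod.fst (hsh (u, v₀) (u', v₀)),
    fun v v' ↦ congrArg Prod.snd (hsh (u₀, v) (u₀, v')), fun _ ↦ rfl⟩
end

section
/- Let T₁ and T₂ be trees with vertex sets V₁ and V₂, and let Γ be an Ã₁×Ã₁ group, i.e. a group of shape-preserving bijections of V₁×V₂ acting simply transitively on V₁×V₂. Fix a vertex v₀ ∈ V₁×V₂, define sh(c) = sh(v₀, c·v₀) for c ∈ Γ, and set N₁ = {a ∈ Γ : sh(a) = (1,0)} and N₂ = {b ∈ Γ : sh(b) = (0,1)}. Then every element c ∈ Γ with sh(c) = (m,n) can be written as c = a₁⋯a_m·b₁⋯b_n with a₁,…,a_m ∈ N₁ and b₁,…,b_n ∈ N₂, and the factors a₁,…,a_m, b₁,…,b_n in such an expression are uniquely determined by c. -/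
/-!
Call a word `g₁ ⋯ g_k` in `Γ` geodesic if `sh(g₁ ⋯ g_k) = sh(g₁) + ⋯ + sh(g_k)`. Walking along
geodesics of the two trees and lifting vertices to `Γ` by simple transitivity, every list of shapes
summing to `sh(c)` is the shape sequence of a word with product `c`. Conversely, in a tree the
vertex at prescribed distances from the two ends of a geodesic is unique; by shape preservation,
`sh(g) + sh(g⁻¹ c) = sh(c)` places `g • v₀` at such distances from `v₀` and `c • v₀`. So the first
letter, and inductively the whole geodesic word, is determined by its product and its shape
sequence. A reduced expression of an element of shape `(m, n)` is exactly a word with shape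
sequence `(1,0)^m (0,1)^n`, which is automatically geodesic.
-/

namespace SimpleGraph

variable {V : Type*} {G : SimpleGraph V}

theorem Connected.exists_dist_eq_of_dist_eq_add (hG : G.Connected) {u w : V} {k l : ℕ}
    (h : G.dist u w = k + l) : ∃ x, G.dist u x = k ∧ G.dist x w = l := by
  obtain ⟨p, hp⟩ := hG.exists_walk_length_eq_dist u w
  have hux := dist_le (p.take k)
  have hxw := dist_le (p.drop k)
  have htri := hG.dist_triangle (u := u) (v := p.getVert k) (w := w)
  rw [Walk.take_length] at hux
  rw [Walk.drop_length] at hxw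
  exact ⟨p.getVert k, by omega, by omega⟩

theorem IsTree.eq_of_dist_add_dist_eq_s14 (hG : G.IsTree) {u w x x' : V}
    (hx : G.dist u x + G.dist x w = G.dist u w) (hx' : G.dist u x' + G.dist x' w = G.dist u w)
    (hxx' : G.dist u x = G.dist u x') : x = x' := by
  obtain ⟨p, hp⟩ := hG.connected.exists_walk_length_eq_dist u x
  obtain ⟨q, hq⟩ := hG.connected.exists_walk_length_eq_dist x w
  obtain ⟨p', hp'⟩ := hG.connected.exists_walk_length_eq_dist u x'
  obtain ⟨q', hq'⟩ := hG.connected.exists_walk_length_eq_dist x' w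
  -- Both concatenations are geodesics, hence the unique path from `u` to `w`.
  have hpath : p.append q = p'.append q' :=
    (hG.existsUnique_path u w).unique
      ((p.append q).isPath_of_length_eq_dist (by rw [Walk.length_append, hp, hq, hx]))
      ((p'.append q').isPath_of_length_eq_dist (by rw [Walk.length_append, hp', hq', hx']))
  calc x = (p.append q).getVert p.length := by simp [Walk.getVert_append]
    _ = (p'.append q').getVert p'.length := by rw [hpath, hp, hp', hxx']
    _ = x' := by simp [Walk.getVert_append]

end SimpleGraph

section Shape

variable {V₁ V₂ : Type*} {T₁ : SimpleGraph V₁} {T₂ : SimpleGraph V₂}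

theorem shape_triangle (hT₁ : T₁.Connected) (hT₂ : T₂.Connected) (u v w : V₁ × V₂) :
    shape T₁ T₂ u w ≤ shape T₁ T₂ u v + shape T₁ T₂ v w :=
  ⟨hT₁.dist_triangle, hT₂.dist_triangle⟩

theorem eq_of_shape_eq_zero (hT₁ : T₁.Connected) (hT₂ : T₂.Connected) {u v : V₁ × V₂}
    (h : shape T₁ T₂ u v = 0) : u = v := by
  simp only [shape, Prod.mk_eq_zero] at h
  exact Prod.ext (hT₁.dist_eq_zero_iff.1 h.1) (hT₂.dist_eq_zero_iff.1 h.2)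

theorem exists_shape_eq_of_shape_eq_add (hT₁ : T₁.Connected) (hT₂ : T₂.Connected) {u w : V₁ × V₂}
    {s t : ℕ × ℕ} (h : shape T₁ T₂ u w = s + t) :
    ∃ x, shape T₁ T₂ u x = s ∧ shape T₁ T₂ x w = t := by
  obtain ⟨x₁, hux₁, hx₁w⟩ := hT₁.exists_dist_eq_of_dist_eq_add (congrArg Prod.fst h)
  obtain ⟨x₂, hux₂, hx₂w⟩ := hT₂.exists_dist_eq_of_dist_eq_add (congrArg Prod.snd h)
  exact ⟨(x₁, x₂), Prod.ext hux₁ hux₂, Prod.ext hx₁w hx₂w⟩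

theorem eq_of_shape_add_shape_eq (hT₁ : T₁.IsTree) (hT₂ : T₂.IsTree) {u w x x' : V₁ × V₂}
    (hx : shape T₁ T₂ u x + shape T₁ T₂ x w = shape T₁ T₂ u w)
    (hx' : shape T₁ T₂ u x' + shape T₁ T₂ x' w = shape T₁ T₂ u w)
    (hxx' : shape T₁ T₂ u x = shape T₁ T₂ u x') : x = x' :=
  Prod.ext
    (hT₁.eq_of_dist_add_dist_eq_s14 (congrArg Prod.fst hx) (congrArg Prod.fst hx')
      (congrArg Prod.fst hxx'))
    (hT₂.eq_of_dist_add_dist_eq_s14 (congrArg Prod.snd hx) (congrArg Prod.snd hx')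
      (congrArg Prod.snd hxx'))

end Shape

section ShapeOf

variable {V₁ V₂ : Type*} {T₁ : SimpleGraph V₁} {T₂ : SimpleGraph V₂}
  {Γ : Type*} [Group Γ] [MulAction Γ (V₁ × V₂)] {v₀ : V₁ × V₂}

variable (T₁ T₂ Γ) in
def ShapePreserving : Prop :=
  ∀ (c : Γ) (u v : V₁ × V₂), shape T₁ T₂ (c • u) (c • v) = shape T₁ T₂ u v

variable (T₁ T₂ v₀) in
noncomputable def shapeOf (c : Γ) : ℕ × ℕ :=
  shape T₁ T₂ v₀ (c • v₀)

variable (T₁ T₂ v₀) in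
def IsGeodesicWord (w : List Γ) : Prop :=
  shapeOf T₁ T₂ v₀ w.prod = (w.map (shapeOf T₁ T₂ v₀)).sum

theorem shape_smul_mul (hsh : ShapePreserving T₁ T₂ Γ) (g h : Γ) :
    shape T₁ T₂ (g • v₀) ((g * h) • v₀) = shapeOf T₁ T₂ v₀ h := by
  rw [mul_smul]
  exact hsh g v₀ (h • v₀)

theorem shapeOf_mul_le (hT₁ : T₁.Connected) (hT₂ : T₂.Connected)
    (hsh : ShapePreserving T₁ T₂ Γ) (g h : Γ) :
    shapeOf T₁ T₂ v₀ (g * h) ≤ shapeOf T₁ T₂ v₀ g + shapeOf T₁ T₂ v₀ h := by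
  rw [← shape_smul_mul hsh g h]
  exact shape_triangle hT₁ hT₂ _ _ _

theorem shapeOf_list_prod_le (hT₁ : T₁.Connected) (hT₂ : T₂.Connected)
    (hsh : ShapePreserving T₁ T₂ Γ) (w : List Γ) :
    shapeOf T₁ T₂ v₀ w.prod ≤ (w.map (shapeOf T₁ T₂ v₀)).sum := by
  induction w with
  | nil => simp [shapeOf, shape]
  | cons g w ih =>
    simpa only [List.prod_cons, List.map_cons, List.sum_cons] using
      (shapeOf_mul_le hT₁ hT₂ hsh g w.prod).trans (add_le_add_right ih _)

theorem IsGeodesicWord.of_cons (hT₁ : T₁.Connected) (hT₂ : T₂.Connected)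
    (hsh : ShapePreserving T₁ T₂ Γ) {g : Γ} {w : List Γ} (hw : IsGeodesicWord T₁ T₂ v₀ (g :: w)) :
    IsGeodesicWord T₁ T₂ v₀ w ∧
      shapeOf T₁ T₂ v₀ g + shapeOf T₁ T₂ v₀ w.prod = shapeOf T₁ T₂ v₀ (g * w.prod) := by
  rw [IsGeodesicWord, List.prod_cons, List.map_cons, List.sum_cons] at hw
  have hle : (w.map (shapeOf T₁ T₂ v₀)).sum ≤ shapeOf T₁ T₂ v₀ w.prod :=
    le_of_add_le_add_left (hw ▸ shapeOf_mul_le hT₁ hT₂ hsh g w.prod)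
  have hw' : IsGeodesicWord T₁ T₂ v₀ w := (shapeOf_list_prod_le hT₁ hT₂ hsh w).antisymm hle
  exact ⟨hw', by rw [hw, hw']⟩

theorem exists_word_map_shapeOf_eq (hT₁ : T₁.Connected) (hT₂ : T₂.Connected)
    (hsh : ShapePreserving T₁ T₂ Γ) (hbij : Function.Bijective fun g : Γ => g • v₀) :
    ∀ (s : List (ℕ × ℕ)) (c : Γ), shapeOf T₁ T₂ v₀ c = s.sum →
      ∃ w : List Γ, w.map (shapeOf T₁ T₂ v₀) = s ∧ w.prod = c
  | [], c, hc => ⟨[], rfl, hbij.1 (by simpa using eq_of_shape_eq_zero hT₁ hT₂ hc)⟩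
  | e :: s, c, hc => by
    obtain ⟨x, hx, hxc⟩ := exists_shape_eq_of_shape_eq_add hT₁ hT₂ (hc.trans List.sum_cons)
    obtain ⟨g, rfl⟩ := hbij.2 x
    obtain ⟨w, hw, hwc⟩ := exists_word_map_shapeOf_eq hT₁ hT₂ hsh hbij s (g⁻¹ * c)
      (by rw [← shape_smul_mul hsh, mul_inv_cancel_left]; exact hxc)
    exact ⟨g :: w, by rw [List.map_cons, hw]; exact congrArg (· :: s) hx,
      by rw [List.prod_cons, hwc, mul_inv_cancel_left]⟩

theorem IsGeodesicWord.eq_of_prod_eq (hT₁ : T₁.IsTree) (hT₂ : T₂.IsTree)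
    (hsh : ShapePreserving T₁ T₂ Γ) (hinj : Function.Injective fun g : Γ => g • v₀)
    {w w' : List Γ}
    (hw : IsGeodesicWord T₁ T₂ v₀ w) (hw' : IsGeodesicWord T₁ T₂ v₀ w')
    (hprod : w.prod = w'.prod) (hmap : w.map (shapeOf T₁ T₂ v₀) = w'.map (shapeOf T₁ T₂ v₀)) :
    w = w' := by
  induction w generalizing w' with
  | nil => simpa [eq_comm] using hmap
  | cons g w ih =>
    obtain - | ⟨g', w'⟩ := w'
    · simp at hmap
    rw [List.map_cons, List.map_cons, List.cons_eq_cons] at hmap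
    rw [List.prod_cons, List.prod_cons] at hprod
    obtain ⟨htail, hg⟩ := hw.of_cons hT₁.connected hT₂.connected hsh
    obtain ⟨htail', hg'⟩ := hw'.of_cons hT₁.connected hT₂.connected hsh
    rw [← shape_smul_mul hsh g w.prod] at hg
    rw [← shape_smul_mul hsh g' w'.prod, ← hprod] at hg'
    obtain rfl : g = g' := hinj (eq_of_shape_add_shape_eq (u := v₀) hT₁ hT₂ hg hg' hmap.1)
    rw [ih htail htail' (mul_left_cancel hprod) hmap.2]

end ShapeOf

/-- In an `Ã₁×Ã₁` group `Γ` (a group of shape-preserving bijections acting simply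
transitively on the vertices of a product of two trees), every element `c` of
shape `(m,n)` has a unique reduced expression `c = a₁ ⋯ a_m b₁ ⋯ b_n` with each
`aᵢ` of shape `(1,0)` and each `bᵢ` of shape `(0,1)`. -/
theorem unique_reduced_expression_A1xA1 {V₁ V₂ : Type*}
    (T₁ : SimpleGraph V₁) (T₂ : SimpleGraph V₂)
    (hT₁ : T₁.IsTree) (hT₂ : T₂.IsTree)
    {Γ : Type*} [Group Γ] [MulAction Γ (V₁ × V₂)]
    (hsh : ∀ (c : Γ) (u v : V₁ × V₂), shape T₁ T₂ (c • u) (c • v) = shape T₁ T₂ u v)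
    (hst : ∀ x y : V₁ × V₂, ∃! c : Γ, c • x = y)
    (v₀ : V₁ × V₂) (m n : ℕ) (c : Γ)
    (hc : shape T₁ T₂ v₀ (c • v₀) = (m, n)) :
    ∃! p : List Γ × List Γ,
      p.1.length = m ∧ p.2.length = n ∧
      (∀ a ∈ p.1, shape T₁ T₂ v₀ (a • v₀) = (1, 0)) ∧
      (∀ b ∈ p.2, shape T₁ T₂ v₀ (b • v₀) = (0, 1)) ∧
      (p.1 ++ p.2).prod = c := by
  have hbij : Function.Bijective fun g : Γ => g • v₀ :=
    ⟨fun g g' h => (hst v₀ (g • v₀)).unique rfl h.symm, fun y => (hst v₀ y).exists⟩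
  set s := List.replicate m ((1, 0) : ℕ × ℕ) ++ List.replicate n (0, 1)
  have hgeod (w : List Γ) (hw : w.map (shapeOf T₁ T₂ v₀) = s) (hwc : w.prod = c) :
      IsGeodesicWord T₁ T₂ v₀ w := by
    simp [IsGeodesicWord, hw, hwc, s, shapeOf, hc]
  obtain ⟨w, hw, hwc⟩ := exists_word_map_shapeOf_eq hT₁.connected hT₂.connected hsh hbij s c
    (by simp [s, shapeOf, hc])
  have hrep {L : List Γ} {k : ℕ} {e : ℕ × ℕ} : L.map (shapeOf T₁ T₂ v₀) = List.replicate k e ↔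
      L.length = k ∧ ∀ g ∈ L, shapeOf T₁ T₂ v₀ g = e := by
    simp [List.eq_replicate_iff]
  obtain ⟨A, B, rfl, hA, hB⟩ := List.map_eq_append_iff.1 hw
  refine ⟨(A, B), ⟨(hrep.1 hA).1, (hrep.1 hB).1, (hrep.1 hA).2, (hrep.1 hB).2, hwc⟩, ?_⟩
  rintro ⟨A', B'⟩ ⟨hA'l, hB'l, hA', hB', hprod⟩
  have hmap : (A' ++ B').map (shapeOf T₁ T₂ v₀) = s := by
    rw [List.map_append, hrep.2 ⟨hA'l, hA'⟩, hrep.2 ⟨hB'l, hB'⟩]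
  obtain ⟨rfl, rfl⟩ := List.append_inj
    (IsGeodesicWord.eq_of_prod_eq hT₁ hT₂ hsh hbij.1 (hgeod _ hmap hprod) (hgeod _ hw hwc)
      (hprod.trans hwc.symm) (hmap.trans hw.symm)) (hA'l.trans (hrep.1 hA).1.symm)
  rfl
end
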